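/- Let X and Y be topological spaces, f : X → Y a continuous open surjection with connected fibers, and suppose X is connected. Then for any sheaf G of sets (or abelian groups) on Y, the global sections of the pullback sheaf f^*G on X are naturally isomorphic to the global sections of G on Y. -/

import Mathlib

/-!
A global section `t` of `f⁻¹G` has at each `x` a germ in `(f⁻¹G)ₓ ≅ G_{f x}`, so near `x` it is
the image of a section of `G` near `f x`. Along a fibre `f⁻¹{y}` the germs at `y` of these local
lifts are locally constant, hence constant since the fibre is connected: this defines a germ
`h y ∈ G_y` for every `y` (`f` is surjective). As `f` is open, the images of the neighbourhoods of
the points of `X` are open, so `h` is locally given by sections of `G`, which glue to a global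
section mapping to `t`. Injectivity follows from the stalk isomorphisms and surjectivity of `f`.
-/

open CategoryTheory TopologicalSpace Opposite

universe u

namespace TopCat.Presheaf

variable {C : Type*} [Category C] [Limits.HasColimits C] {X Y : TopCat.{u}} (f : X ⟶ Y)

noncomputable def stalkMapOfHomPushforward {P : Y.Presheaf C} {Q : X.Presheaf C}
    (θ : P ⟶ (pushforward C f).obj Q) (x : X) : P.stalk (f x) ⟶ Q.stalk x :=
  (stalkFunctor C (f x)).map θ ≫ Q.stalkPushforward C f x

lemma germ_stalkMapOfHomPushforward {P : Y.Presheaf C} {Q : X.Presheaf C}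
    (θ : P ⟶ (pushforward C f).obj Q) (x : X) (V : Opens Y) (hV : f x ∈ V) :
    P.germ V (f x) hV ≫ stalkMapOfHomPushforward f θ x =
      θ.app (op V) ≫ Q.germ ((Opens.map f).obj V) x hV := by
  erw [stalkMapOfHomPushforward, stalkFunctor_map_germ_assoc]
  exact congrArg (θ.app (op V) ≫ ·) (stalkPushforward_germ C f Q V x hV)

lemma stalkMapOfHomPushforward_comp {P : Y.Presheaf C} {Q Q' : X.Presheaf C}
    (θ : P ⟶ (pushforward C f).obj Q) (φ : Q ⟶ Q') (x : X) :
    stalkMapOfHomPushforward f (θ ≫ (pushforward C f).map φ) x =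
      stalkMapOfHomPushforward f θ x ≫ (stalkFunctor C x).map φ := by
  refine stalk_hom_ext _ fun V hV ↦ ?_
  erw [germ_stalkMapOfHomPushforward, reassoc_of% (germ_stalkMapOfHomPushforward f θ x V hV),
    stalkFunctor_map_germ, NatTrans.comp_app, Category.assoc]
  rfl

end TopCat.Presheaf

namespace TopCat.Sheaf

lemma exists_section_of_locally_germ {X : TopCat.{u}} (G : X.Sheaf (Type u))
    (h : ∀ x : X, G.presheaf.stalk x)
    (hloc : ∀ x : X, ∃ (U : Opens X) (_ : x ∈ U) (s : G.presheaf.obj (op U)),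
      ∀ x' (hx' : x' ∈ U), G.presheaf.germ U x' hx' s = h x') :
    ∃ s : G.presheaf.obj (op ⊤), ∀ x : X, G.presheaf.germ ⊤ x True.intro s = h x := by
  choose U hx s hs using hloc
  have compatible : Presheaf.IsCompatible G.presheaf U s := fun i j ↦
    Presheaf.section_ext G _ _ _ fun x _ ↦ by
      rw [Presheaf.germ_res_apply, Presheaf.germ_res_apply, hs, hs]
  have cover : ⊤ ≤ iSup U := fun x _ ↦ Opens.mem_iSup.mpr ⟨x, hx x⟩
  obtain ⟨s', hs', -⟩ := G.existsUnique_gluing' U ⊤ (fun _ ↦ homOfLE le_top) cover s compatible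
  refine ⟨s', fun x ↦ ?_⟩
  rw [← Presheaf.germ_res_apply G.presheaf (homOfLE le_top) x (hx x), hs', hs]

open Presheaf

section HomToPushforward

variable {X Y : TopCat.{u}} {f : X ⟶ Y} {G : Y.Sheaf (Type u)} {F : X.Sheaf (Type u)}
  (θ : G ⟶ (pushforward (Type u) f).obj F)

lemma stalkMapOfHomPushforward_germ (x : X) (V : Opens Y) (hV : f x ∈ V)
    (s : G.presheaf.obj (op V)) :
    stalkMapOfHomPushforward f θ.hom x (G.presheaf.germ V (f x) hV s) =
      F.presheaf.germ ((Opens.map f).obj V) x hV (θ.hom.app (op V) s) :=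
  ConcreteCategory.congr_hom (germ_stalkMapOfHomPushforward f θ.hom x V hV) s

lemma germ_eq_of_injective_stalkMap {x : X}
    (hθ : Function.Injective (stalkMapOfHomPushforward f θ.hom x))
    {V V' : Opens Y} (hV : f x ∈ V) (hV' : f x ∈ V')
    {s : G.presheaf.obj (op V)} {s' : G.presheaf.obj (op V')}
    (h : F.presheaf.germ _ x hV (θ.hom.app (op V) s) =
      F.presheaf.germ _ x hV' (θ.hom.app (op V') s')) :
    G.presheaf.germ V (f x) hV s = G.presheaf.germ V' (f x) hV' s' := by
  apply hθ
  rwa [stalkMapOfHomPushforward_germ, stalkMapOfHomPushforward_germ]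

lemma injective_app_top_of_injective_stalkMap (hf : Function.Surjective f)
    (hθ : ∀ x, Function.Injective (stalkMapOfHomPushforward f θ.hom x)) :
    Function.Injective (θ.hom.app (op ⊤)) := fun s s' h ↦
  section_ext G ⊤ s s' fun y hy ↦ by
    obtain ⟨x, rfl⟩ := hf y
    exact germ_eq_of_injective_stalkMap θ (hθ x) hy hy (congrArg _ h)

structure LocalLift (t : F.presheaf.obj (op ((Opens.map f).obj ⊤))) (x : X) where
  V : Opens Y
  s : G.presheaf.obj (op V)
  U : Opens X
  mem : x ∈ U
  le : U ≤ (Opens.map f).obj V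
  germ_eq : ∀ x' (hx' : x' ∈ U), F.presheaf.germ _ x' (le hx') (θ.hom.app (op V) s) =
    F.presheaf.germ ((Opens.map f).obj ⊤) x' True.intro t

variable {θ} {t : F.presheaf.obj (op ((Opens.map f).obj ⊤))}

lemma LocalLift.map_mem {x : X} (L : LocalLift θ t x) : f x ∈ L.V :=
  L.le L.mem

lemma LocalLift.mem_of_map_eq {x : X} {y : Y} (L : LocalLift θ t x) (h : f x = y) : y ∈ L.V :=
  h ▸ L.map_mem

lemma LocalLift.nonempty_of_surjective_stalkMap (x : X)
    (hθ : Function.Surjective (stalkMapOfHomPushforward f θ.hom x)) :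
    Nonempty (LocalLift θ t x) := by
  obtain ⟨g, hg⟩ := hθ (F.presheaf.germ ((Opens.map f).obj ⊤) x True.intro t)
  obtain ⟨V, hV, s, rfl⟩ := G.presheaf.exists_germ_eq g
  rw [stalkMapOfHomPushforward_germ] at hg
  obtain ⟨U, hxU, iV, iT, h⟩ := F.presheaf.germ_eq x hV (by trivial) _ _ hg
  refine ⟨⟨V, s, U, hxU, iV.le, fun x' hx' ↦ ?_⟩⟩
  calc _ = F.presheaf.germ U x' hx' (F.presheaf.map iV.op (θ.hom.app (op V) s)) :=
        (germ_res_apply F.presheaf iV x' hx' _).symm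
    _ = _ := (congrArg _ h).trans (germ_res_apply F.presheaf iT x' hx' t)

lemma LocalLift.germ_eq_germ {x x' a : X}
    (hθ : Function.Injective (stalkMapOfHomPushforward f θ.hom a))
    (L : LocalLift θ t x) (L' : LocalLift θ t x') (ha : a ∈ L.U) (ha' : a ∈ L'.U) :
    G.presheaf.germ L.V (f a) (L.le ha) L.s = G.presheaf.germ L'.V (f a) (L'.le ha') L'.s :=
  germ_eq_of_injective_stalkMap θ hθ _ _ ((L.germ_eq a ha).trans (L'.germ_eq a ha').symm)

lemma LocalLift.germ_eq_germ_of_mem_fiber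
    (hθ : ∀ x, Function.Injective (stalkMapOfHomPushforward f θ.hom x))
    (L : ∀ x, LocalLift θ t x) {y : Y} (hfib : IsPreconnected (f ⁻¹' {y}))
    {a b : X} (ha : f a = y) (hb : f b = y) :
    G.presheaf.germ (L a).V y ((L a).mem_of_map_eq ha) (L a).s =
      G.presheaf.germ (L b).V y ((L b).mem_of_map_eq hb) (L b).s := by
  have := isPreconnected_iff_preconnectedSpace.mp hfib
  let σ : f ⁻¹' {y} → G.presheaf.stalk y := fun z ↦
    G.presheaf.germ (L z).V y ((L z).mem_of_map_eq z.2) (L z).s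
  have hσ : IsLocallyConstant σ := by
    refine (IsLocallyConstant.iff_exists_open σ).mpr fun z ↦
      ⟨Subtype.val ⁻¹' (L z).U, (L z).U.2.preimage continuous_subtype_val, (L z).mem, ?_⟩
    rintro ⟨z', hz' : f z' = y⟩ hz'U
    subst hz'
    exact ((L z).germ_eq_germ (hθ z') (L z') hz'U (L z').mem).symm
  exact hσ.apply_eq_of_preconnectedSpace ⟨a, ha⟩ ⟨b, hb⟩

lemma surjective_app_top_of_bijective_stalkMap (hopen : IsOpenMap f)
    (hsurj : Function.Surjective f) (hfib : ∀ y : Y, IsPreconnected (f ⁻¹' {y}))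
    (hθ : ∀ x, Function.Bijective (stalkMapOfHomPushforward f θ.hom x)) :
    Function.Surjective (θ.hom.app (op ⊤)) := by
  intro (t : F.presheaf.obj (op ((Opens.map f).obj ⊤)))
  let L : ∀ x, LocalLift θ t x := fun x ↦
    (LocalLift.nonempty_of_surjective_stalkMap x (hθ x).2).some
  have hinj := fun x ↦ (hθ x).1
  -- By `germ_eq_germ_of_mem_fiber`, `h y` does not depend on the chosen preimage of `y`.
  let h : ∀ y, G.presheaf.stalk y := fun y ↦
    G.presheaf.germ _ y ((L _).mem_of_map_eq (hsurj y).choose_spec) (L (hsurj y).choose).s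
  have germ_eq_h : ∀ x, G.presheaf.germ _ (f x) (L x).map_mem (L x).s = h (f x) :=
    fun x ↦ LocalLift.germ_eq_germ_of_mem_fiber hinj L (hfib _) rfl (hsurj _).choose_spec
  obtain ⟨s, hs⟩ := G.exists_section_of_locally_germ h fun y ↦ by
    obtain ⟨x, rfl⟩ := hsurj y
    let W : Opens Y := ⟨f '' (L x).U, hopen _ (L x).U.2⟩
    have hW : W ≤ (L x).V := Set.image_subset_iff.mpr (L x).le
    refine ⟨W, ⟨x, (L x).mem, rfl⟩, G.presheaf.map (homOfLE hW).op (L x).s, ?_⟩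
    intro y hy
    obtain ⟨a, ha, rfl⟩ := id hy
    rw [germ_res_apply G.presheaf (homOfLE hW) (f a) hy,
      (L x).germ_eq_germ (hinj a) (L a) ha (L a).mem, germ_eq_h]
  refine ⟨s, section_ext F _ _ _ fun x (_ : x ∈ (Opens.map f).obj ⊤) ↦ ?_⟩
  calc _ = stalkMapOfHomPushforward f θ.hom x (G.presheaf.germ ⊤ (f x) True.intro s) :=
        (stalkMapOfHomPushforward_germ θ x ⊤ True.intro s).symm
    _ = stalkMapOfHomPushforward f θ.hom x (G.presheaf.germ _ (f x) (L x).map_mem (L x).s) := by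
        rw [hs, germ_eq_h]
    _ = _ := (stalkMapOfHomPushforward_germ θ x _ _ _).trans ((L x).germ_eq x (L x).mem)

lemma bijective_app_top_of_bijective_stalkMap (hopen : IsOpenMap f)
    (hsurj : Function.Surjective f) (hfib : ∀ y : Y, IsPreconnected (f ⁻¹' {y}))
    (hθ : ∀ x, Function.Bijective (stalkMapOfHomPushforward f θ.hom x)) :
    Function.Bijective (θ.hom.app (op ⊤)) :=
  ⟨injective_app_top_of_injective_stalkMap _ hsurj fun x ↦ (hθ x).1,
    surjective_app_top_of_bijective_stalkMap hopen hsurj hfib hθ⟩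

end HomToPushforward

section Pullback

variable {X Y : TopCat.{u}} (f : X ⟶ Y) (G : Y.Sheaf (Type u))

lemma bijective_stalkMap_sheafAdjunctionContinuous_unit (x : X) :
    Function.Bijective (stalkMapOfHomPushforward f
      ((Functor.sheafPullbackConstruction.sheafAdjunctionContinuous (Opens.map f) (Type u)
        (Opens.grothendieckTopology Y) (Opens.grothendieckTopology X)).unit.app G).hom x) := by
  have hunit : stalkMapOfHomPushforward f
      ((Functor.sheafPullbackConstruction.sheafAdjunctionContinuous (Opens.map f) (Type u)
        (Opens.grothendieckTopology Y) (Opens.grothendieckTopology X)).unit.app G).hom x =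
      stalkPullbackHom (Type u) f G.obj x ≫ (stalkFunctor (Type u) x).map
        (toSheafify (Opens.grothendieckTopology X) ((Presheaf.pullback (Type u) f).obj G.obj)) :=
    stalkMapOfHomPushforward_comp f _ _ x
  have hsheafify := stalkFunctor_map_unit_toSheafify_isIso x (Type u)
    ((Presheaf.pullback (Type u) f).obj G.obj)
  have hpullback : IsIso (stalkPullbackHom (Type u) f G.obj x) :=
    inferInstanceAs (IsIso (stalkPullbackIso (Type u) f G.obj x).hom)
  rw [hunit]
  exact ((isIso_iff_bijective _).mp hsheafify).comp ((isIso_iff_bijective _).mp hpullback)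

end Pullback

end TopCat.Sheaf

theorem stmt0_general {X Y : TopCat.{0}} (f : X ⟶ Y)
    (hopen : IsOpenMap f) (hsurj : Function.Surjective f)
    (hfib : ∀ y : Y, IsConnected (f ⁻¹' {y}))
    (G : TopCat.Sheaf (Type) Y) :
    IsIso (((TopCat.Sheaf.pullbackPushforwardAdjunction (Type) f).unit.app G).hom.app (op ⊤)) := by
  -- `pullbackPushforwardAdjunction` is an abstract left adjoint; compare it with the explicit
  -- one built from the left Kan extension followed by sheafification.
  let adj := Functor.sheafPullbackConstruction.sheafAdjunctionContinuous (Opens.map f) (Type)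
    (Opens.grothendieckTopology Y) (Opens.grothendieckTopology X)
  have hbij : Function.Bijective ((adj.unit.app G).hom.app (op ⊤)) :=
    TopCat.Sheaf.bijective_app_top_of_bijective_stalkMap hopen hsurj
      (fun y ↦ (hfib y).isPreconnected)
      (TopCat.Sheaf.bijective_stalkMap_sheafAdjunctionContinuous_unit f G)
  have hunit := (TopCat.Sheaf.pullbackPushforwardAdjunction (Type) f).unit_leftAdjointUniq_hom_app
    adj G
  let e := ((TopCat.Sheaf.pushforward (Type) f ⋙ sheafToPresheaf _ _).mapIso
    (((TopCat.Sheaf.pullbackPushforwardAdjunction (Type) f).leftAdjointUniq adj).app G)).app (op ⊤)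
  rw [← hunit] at hbij
  rw [isIso_iff_bijective]
  exact ((isIso_iff_bijective e.hom).mp inferInstance).of_comp_iff' _ |>.mp hbij

/-- Let `f : X → Y` be a continuous open surjection with connected fibers
between topological spaces, with `X` connected. Then for any sheaf of types `G` on `Y`, the
global sections of the pullback sheaf `f⁻¹G` are naturally isomorphic to the global sections
of `G`: the canonical comparison map (the component at the top open set of the unit of the
pullback–pushforward adjunction, `G(Y) → (f_* f⁻¹ G)(Y) = (f⁻¹G)(X)`) is an isomorphism. -/
theorem stmt0 {X Y : TopCat.{0}} (f : X ⟶ Y)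
    (hopen : IsOpenMap f) (hsurj : Function.Surjective f)
    (hfib : ∀ y : Y, IsConnected (f ⁻¹' {y}))
    (hconn : ConnectedSpace X)
    (G : TopCat.Sheaf (Type) Y) :
    IsIso (((TopCat.Sheaf.pullbackPushforwardAdjunction (Type) f).unit.app G).hom.app (op ⊤)) :=
  stmt0_general f hopen hsurj hfib G
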